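/- arXiv:2204.00365 — 3 statements merged into one kernel-verified Lean document; each statement's English description precedes it below -/
import Mathlib

section
/- For every w ∈ ℂ with Im w > 0, one has |tan w − i| ≤ 2·exp(−2·Im w) / (1 − exp(−2·Im w)). -/
open Complex Real

/-! Since `sin w - i cos w = -i exp (i w)`, we get `‖tan w - i‖ = exp (-Im w) / ‖cos w‖`, and
`‖cos w‖ ≥ sinh (Im w)` by the reverse triangle inequality; `exp (-y) / sinh y` is exactly the
stated bound. -/

theorem Real.exp_neg_div_sinh (y : ℝ) :
    Real.exp (-y) / Real.sinh y = 2 * Real.exp (-2 * y) / (1 - Real.exp (-2 * y)) := by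
  have hexp : Real.exp (-2 * y) = Real.exp (-y) * Real.exp (-y) := by
    rw [← Real.exp_add]; ring_nf
  have hpos := Real.exp_pos (-y)
  rw [Real.sinh_eq, hexp, ← neg_neg y, Real.exp_neg (-y), neg_neg]
  field_simp

theorem Complex.sinh_abs_im_le_norm_cos (z : ℂ) : Real.sinh |z.im| ≤ ‖Complex.cos z‖ := by
  have hexp : ∀ u : ℂ, ‖Complex.exp (u * I)‖ = Real.exp (-u.im) := fun u => by
    simp [Complex.norm_exp]
  have key := abs_norm_sub_norm_le (Complex.exp (-z * I)) (-Complex.exp (z * I))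
  rw [norm_neg, hexp, hexp, sub_neg_eq_add, add_comm, ← Complex.two_cos z] at key
  simp only [neg_im, neg_neg, norm_mul, Complex.norm_two] at key
  rw [← Real.abs_sinh, Real.sinh_eq, abs_div, abs_two]
  linarith [key]

theorem Complex.tan_sub_I (w : ℂ) (hw : Complex.cos w ≠ 0) :
    Complex.tan w - I = -I * Complex.exp (w * I) / Complex.cos w := by
  rw [Complex.tan_eq_sin_div_cos, ← Complex.cos_add_sin_I]
  field_simp
  linear_combination Complex.sin w * I_sq

/-- Quantitative convergence of tan to i in the upper half-plane. -/
theorem stmt_8 (w : ℂ) (h : 0 < w.im) :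
    ‖Complex.tan w - Complex.I‖ ≤
      2 * Real.exp (-2 * w.im) / (1 - Real.exp (-2 * w.im)) := by
  have hsinh : Real.sinh w.im ≤ ‖Complex.cos w‖ := by
    simpa [abs_of_pos h] using Complex.sinh_abs_im_le_norm_cos w
  have hsinh_pos : 0 < Real.sinh w.im := Real.sinh_pos_iff.2 h
  have hcos : Complex.cos w ≠ 0 := norm_pos_iff.1 (hsinh_pos.trans_le hsinh)
  calc ‖Complex.tan w - Complex.I‖ = Real.exp (-w.im) / ‖Complex.cos w‖ := by
        rw [Complex.tan_sub_I w hcos, norm_div, norm_mul, norm_neg, norm_I, one_mul,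
          Complex.norm_exp]
        simp
    _ ≤ Real.exp (-w.im) / Real.sinh w.im := by gcongr
    _ = _ := Real.exp_neg_div_sinh w.im
end

section
/- For every real λ with |λ| < 1/5, there exists α ∈ ℝ such that λ + tan(α²) = α, |2α(1 + tan(α²)²)| < 1 (so α is an attracting fixed point of the map x ↦ λ + tan(x²) on ℝ), and the orbit of the origin converges to α: the iterates (x ↦ λ + tan(x²))^[n](0) tend to α as n → ∞. -/
open Real Filter

/-!
On `[-3/10, 3/10]` one has `0 ≤ tan (x²) ≤ 1/10`, so for `|λ| ≤ 1/5` the map `x ↦ λ + tan (x²)`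
sends this interval into itself, and its derivative `2x (1 + tan (x²)²)` has modulus at most
`7/10` there. The map is therefore a contraction of a complete interval containing `0`, and the
Banach fixed point theorem yields a fixed point in the interval attracting the orbit of `0`.
-/

namespace TanSqMap

open Metric Set

noncomputable def tanSqMap (l x : ℝ) : ℝ := l + tan (x ^ 2)

lemma tan_le_div_one_sub_sq_div_two {y : ℝ} (hy₀ : 0 ≤ y) (hy : y ^ 2 < 2) :
    tan y ≤ y / (1 - y ^ 2 / 2) := by
  have hden : 0 < 1 - y ^ 2 / 2 := by linarith
  have hcos : 1 - y ^ 2 / 2 ≤ cos y := one_sub_sq_div_two_le_cos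
  calc tan y = sin y / cos y := tan_eq_sin_div_cos y
    _ ≤ y / cos y := div_le_div_of_nonneg_right (sin_le hy₀) (hden.trans_le hcos).le
    _ ≤ y / (1 - y ^ 2 / 2) := div_le_div_of_nonneg_left hy₀ hden hcos

lemma tan_sq_mem_Icc {x : ℝ} (hx : |x| ≤ 3 / 10) : tan (x ^ 2) ∈ Icc 0 (1 / 10) := by
  have hsq : x ^ 2 ≤ 9 / 100 := by nlinarith [sq_abs x, abs_nonneg x]
  refine ⟨tan_nonneg_of_nonneg_of_le_pi_div_two (sq_nonneg x) (by linarith [pi_gt_three]), ?_⟩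
  calc tan (x ^ 2) ≤ x ^ 2 / (1 - (x ^ 2) ^ 2 / 2) :=
        tan_le_div_one_sub_sq_div_two (sq_nonneg x) (by nlinarith [sq_nonneg x])
    _ ≤ 1 / 10 := by
        rw [div_le_iff₀ (by nlinarith [sq_nonneg x])]
        nlinarith [sq_nonneg x]

lemma hasDerivAt_tanSqMap (l : ℝ) {x : ℝ} (hx : x ^ 2 < π / 2) :
    HasDerivAt (tanSqMap l) (2 * x * (1 + tan (x ^ 2) ^ 2)) x := by
  have hcos : cos (x ^ 2) ≠ 0 :=
    (cos_pos_of_mem_Ioo ⟨by linarith [pi_pos, sq_nonneg x], hx⟩).ne'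
  have hpow : HasDerivAt (fun y : ℝ => y ^ 2) (2 * x) x := by simpa using hasDerivAt_pow 2 x
  have htan := ((hasDerivAt_tan hcos).comp (h := fun y : ℝ => y ^ 2) x hpow).const_add l
  rwa [one_div, ← inv_one_add_tan_sq hcos, inv_inv, mul_comm] at htan

lemma abs_deriv_tanSqMap_le {x : ℝ} (hx : |x| ≤ 3 / 10) :
    |2 * x * (1 + tan (x ^ 2) ^ 2)| ≤ 7 / 10 := by
  obtain ⟨ht₀, ht⟩ := tan_sq_mem_Icc hx
  rw [abs_mul, abs_mul, abs_two, abs_of_pos (by positivity : 0 < 1 + tan (x ^ 2) ^ 2)]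
  calc 2 * |x| * (1 + tan (x ^ 2) ^ 2) ≤ 2 * (3 / 10) * (1 + (1 / 10) ^ 2) := by gcongr
    _ ≤ 7 / 10 := by norm_num

lemma mapsTo_tanSqMap {l : ℝ} (hl : |l| ≤ 1 / 5) :
    MapsTo (tanSqMap l) (closedBall 0 (3 / 10)) (closedBall 0 (3 / 10)) := by
  intro x hx
  rw [mem_closedBall_zero_iff, norm_eq_abs] at hx ⊢
  obtain ⟨ht₀, ht⟩ := tan_sq_mem_Icc hx
  rw [tanSqMap, abs_le]
  constructor <;> linarith [abs_le.mp hl]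

lemma lipschitzOnWith_tanSqMap (l : ℝ) :
    LipschitzOnWith (7 / 10) (tanSqMap l) (closedBall 0 (3 / 10)) := by
  refine (convex_closedBall 0 _).lipschitzOnWith_of_nnnorm_hasDerivWithin_le
    (f' := fun x => 2 * x * (1 + tan (x ^ 2) ^ 2)) (fun x hx => ?_) (fun x hx => ?_)
  · rw [mem_closedBall_zero_iff, norm_eq_abs] at hx
    have hsq : x ^ 2 < π / 2 := by nlinarith [sq_abs x, abs_nonneg x, pi_gt_three]
    exact (hasDerivAt_tanSqMap l hsq).hasDerivWithinAt
  · rw [mem_closedBall_zero_iff, norm_eq_abs] at hx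
    rw [← NNReal.coe_le_coe, coe_nnnorm, norm_eq_abs]
    exact_mod_cast abs_deriv_tanSqMap_le hx

end TanSqMap

open TanSqMap Metric in
/-- For real |λ| < 1/5 the map x ↦ λ + tan(x²) has an attracting fixed point α
    attracting the orbit of the origin. -/
theorem stmt_10 (l : ℝ) (hl : |l| < 1 / 5) :
    ∃ α : ℝ, l + Real.tan (α ^ 2) = α ∧
      |2 * α * (1 + Real.tan (α ^ 2) ^ 2)| < 1 ∧
      Tendsto (fun n : ℕ => (fun x : ℝ => l + Real.tan (x ^ 2))^[n] 0)
        atTop (nhds α) := by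
  have hmaps := mapsTo_tanSqMap hl.le
  have hcontr : ContractingWith (7 / 10) (hmaps.restrict _ _ _) :=
    ⟨by rw [← NNReal.coe_lt_coe]; norm_num, (lipschitzOnWith_tanSqMap l).mapsToRestrict hmaps⟩
  obtain ⟨α, hα, hfix, htendsto, -⟩ := hcontr.exists_fixedPoint' isClosed_closedBall.isComplete
    hmaps (mem_closedBall_self (by norm_num)) (edist_ne_top _ _)
  rw [mem_closedBall_zero_iff, norm_eq_abs] at hα
  exact ⟨α, hfix, (abs_deriv_tanSqMap_le hα).trans_lt (by norm_num), htendsto⟩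
end

section
/- There exists T > 0 such that for every λ ∈ ℂ with Re λ ≥ 1, Im λ ≥ 1 and (Re λ)·(Im λ) > T, there exists α in the closed ball of radius 1/2 centered at λ + i satisfying: λ + tan(α²) = α; |2α / (cos(α²))²| < 1 (so α is an attracting fixed point of f_λ); and the orbits under f_λ of the two singular values 0 ↦ λ and λ + i both converge to α, i.e. f_λ^[n](0) → α and f_λ^[n](λ + i) → α as n → ∞. -/
/-!
On the disc `B` of radius `1/2` about `λ + i` one has `Im (z²) ≥ Re λ · Im λ`, so `cos (z²)` is
exponentially large on `B`. Hence `tan (z²)` lies within `1/2` of `i`, so `f_λ` maps `B` into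
itself, and `|f_λ'(z)| = |2z / cos² (z²)| ≤ 1/2` once `Re λ · Im λ ≥ 40`. By the contraction
principle `f_λ` has a fixed point `α ∈ B` attracting every orbit starting in `B`. The asymptotic
value `λ + i` is the centre of `B`, and the critical orbit `0 ↦ λ ↦ λ + tan (λ²)` enters `B` after
two steps because `Im (λ²) = 2 Re λ Im λ ≥ 1`.
-/

open Complex Metric Filter Set Function
open scoped NNReal Topology

namespace Complex

lemma sinh_im_le_norm_cos (w : ℂ) : Real.sinh w.im ≤ ‖cos w‖ := by
  have h := norm_sub_norm_le (exp (-w * I)) (-exp (w * I))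
  rw [norm_neg, sub_neg_eq_add, norm_exp, norm_exp] at h
  simp only [neg_mul, neg_re, mul_re, I_re, mul_zero, I_im, mul_one, zero_sub, neg_neg] at h
  rw [cos, norm_div, Complex.norm_ofNat, Real.sinh_eq, neg_mul, add_comm]
  linarith

lemma exp_im_div_four_le_norm_cos {w : ℂ} (hw : 1 ≤ w.im) : Real.exp w.im / 4 ≤ ‖cos w‖ := by
  refine le_trans ?_ (sinh_im_le_norm_cos w)
  have h3 : 3 ≤ Real.exp w.im * Real.exp w.im := by
    rw [← Real.exp_add]; linarith [Real.add_one_le_exp (w.im + w.im)]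
  have hinv : Real.exp (-w.im) * Real.exp w.im = 1 := by rw [← Real.exp_add]; simp
  rw [Real.sinh_eq]
  nlinarith [Real.exp_pos w.im, Real.exp_pos (-w.im)]

lemma tan_sub_I_eq {w : ℂ} (hw : cos w ≠ 0) : tan w - I = -I * exp (w * I) / cos w := by
  rw [tan, div_sub' hw, sin, cos]
  congr 1
  field_simp
  ring

lemma norm_tan_sub_I_le {w : ℂ} (hw : 1 ≤ w.im) : ‖tan w - I‖ ≤ 1 / 2 := by
  have hsinh := sinh_im_le_norm_cos w
  have hsinh_pos : 0 < Real.sinh w.im := Real.sinh_pos_iff.2 (by linarith)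
  have hcos : cos w ≠ 0 := norm_pos_iff.1 (hsinh_pos.trans_le hsinh)
  rw [tan_sub_I_eq hcos, norm_div, norm_mul, norm_neg, norm_I, one_mul, norm_exp,
    div_le_iff₀ (hsinh_pos.trans_le hsinh)]
  simp only [mul_re, I_re, mul_zero, I_im, mul_one, zero_sub]
  suffices Real.exp (-w.im) ≤ Real.sinh w.im / 2 by linarith
  have h5 : 5 ≤ Real.exp w.im * Real.exp w.im := by
    rw [← Real.exp_add]
    nlinarith [Real.quadratic_le_exp_of_nonneg (by linarith : (0 : ℝ) ≤ w.im + w.im)]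
  have hinv : Real.exp (-w.im) * Real.exp w.im = 1 := by rw [← Real.exp_add]; simp
  rw [Real.sinh_eq]
  nlinarith [Real.exp_pos w.im, Real.exp_pos (-w.im)]

end Complex

theorem LipschitzOnWith.exists_attracting_fixedPoint {α : Type*} [MetricSpace α] {f : α → α}
    {s : Set α} {K : ℝ≥0} (hK : K < 1) (hf : LipschitzOnWith K f s) (hsf : MapsTo f s s)
    (hsc : IsComplete s) (hne : s.Nonempty) :
    ∃ a ∈ s, IsFixedPt f a ∧ ∀ x ∈ s, Tendsto (fun n ↦ f^[n] x) atTop (𝓝 a) := by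
  have := hsc.completeSpace_coe
  have := hne.to_subtype
  have hc : ContractingWith K (hsf.restrict f s s) := ⟨hK, hf.mapsToRestrict hsf⟩
  refine ⟨hc.fixedPoint, Subtype.prop _, congrArg Subtype.val hc.fixedPoint_isFixedPt,
    fun x hx ↦ ?_⟩
  convert (continuous_subtype_val.tendsto _).comp (hc.tendsto_iterate_fixedPoint ⟨x, hx⟩)
  simp only [comp_apply, MapsTo.iterate_restrict, MapsTo.val_restrict_apply]

section TanSquareFamily

variable {l z : ℂ}

lemma add_tan_sq_mem_closedBall (hz : 1 ≤ (z ^ 2).im) :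
    l + tan (z ^ 2) ∈ closedBall (l + I) (1 / 2) := by
  rw [mem_closedBall, dist_eq, add_sub_add_left_eq_sub]
  exact norm_tan_sub_I_le hz

lemma re_mul_im_le_im_sq_of_mem_closedBall (hre : 1 ≤ l.re) (him : 1 ≤ l.im)
    (hz : z ∈ closedBall (l + I) (1 / 2)) : l.re * l.im ≤ (z ^ 2).im := by
  rw [mem_closedBall, dist_eq] at hz
  have hre' := (abs_re_le_norm _).trans hz
  have him' := (abs_im_le_norm _).trans hz
  simp only [sub_re, sub_im, add_re, add_im, I_re, I_im, add_zero] at hre' him'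
  rw [abs_le] at hre' him'
  rw [pow_two, mul_im]
  nlinarith

lemma exp_re_mul_im_div_four_le_norm_cos_sq (hre : 1 ≤ l.re) (him : 1 ≤ l.im)
    (hz : z ∈ closedBall (l + I) (1 / 2)) : Real.exp (l.re * l.im) / 4 ≤ ‖cos (z ^ 2)‖ := by
  have hP := re_mul_im_le_im_sq_of_mem_closedBall hre him hz
  have h1 : 1 ≤ (z ^ 2).im := (one_le_mul_of_one_le_of_one_le hre him).trans hP
  exact le_trans (by gcongr) (exp_im_div_four_le_norm_cos h1)

lemma mapsTo_add_tan_sq_closedBall (hre : 1 ≤ l.re) (him : 1 ≤ l.im) :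
    MapsTo (fun z ↦ l + tan (z ^ 2)) (closedBall (l + I) (1 / 2)) (closedBall (l + I) (1 / 2)) :=
  fun _ hz ↦ add_tan_sq_mem_closedBall <|
    (one_le_mul_of_one_le_of_one_le hre him).trans (re_mul_im_le_im_sq_of_mem_closedBall hre him hz)

lemma hasDerivAt_add_tan_sq (l : ℂ) (hz : cos (z ^ 2) ≠ 0) :
    HasDerivAt (fun z ↦ l + tan (z ^ 2)) (2 * z / cos (z ^ 2) ^ 2) z := by
  have h := ((hasDerivAt_tan hz).comp z (by simpa using hasDerivAt_pow 2 z)).const_add l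
  rwa [show 2 * z / cos (z ^ 2) ^ 2 = 1 / cos (z ^ 2) ^ 2 * (2 * z) by ring]

lemma norm_two_mul_div_cos_sq_le (hre : 1 ≤ l.re) (him : 1 ≤ l.im) (hP : 40 ≤ l.re * l.im)
    (hz : z ∈ closedBall (l + I) (1 / 2)) : ‖2 * z / cos (z ^ 2) ^ 2‖ ≤ 1 / 2 := by
  have hcos := exp_re_mul_im_div_four_le_norm_cos_sq hre him hz
  set P := l.re * l.im
  have hnorm : ‖z‖ ≤ P + 3 := by
    have hzl : ‖z - (l + I)‖ ≤ 1 / 2 := by rwa [mem_closedBall, dist_eq] at hz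
    have hl := norm_le_abs_re_add_abs_im l
    rw [abs_of_pos (by linarith), abs_of_pos (by linarith)] at hl
    linarith [norm_sub_norm_le z (l + I), norm_add_le l I, norm_I,
      mul_nonneg (sub_nonneg.2 hre) (sub_nonneg.2 him)]
  have hexp : 64 * (P + 3) ≤ Real.exp P ^ 2 := by
    rw [sq, ← Real.exp_add]
    nlinarith [Real.quadratic_le_exp_of_nonneg (by linarith : (0 : ℝ) ≤ P + P)]
  rw [norm_div, norm_pow, norm_mul, Complex.norm_two,
    div_le_iff₀ (pow_pos ((by positivity : 0 < Real.exp P / 4).trans_le hcos) 2)]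
  nlinarith [pow_le_pow_left₀ (by positivity) hcos 2]

lemma lipschitzOnWith_add_tan_sq_closedBall (hre : 1 ≤ l.re) (him : 1 ≤ l.im)
    (hP : 40 ≤ l.re * l.im) :
    LipschitzOnWith (1 / 2) (fun z ↦ l + tan (z ^ 2)) (closedBall (l + I) (1 / 2)) := by
  refine (convex_closedBall _ _).lipschitzOnWith_of_nnnorm_hasDerivWithin_le
    (fun z hz ↦ (hasDerivAt_add_tan_sq l ?_).hasDerivWithinAt) fun z hz ↦ ?_
  · exact norm_pos_iff.1 <| (by positivity : (0 : ℝ) < _).trans_le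
      (exp_re_mul_im_div_four_le_norm_cos_sq hre him hz)
  · rw [← NNReal.coe_le_coe, coe_nnnorm]
    simpa using norm_two_mul_div_cos_sq_le hre him hP hz

end TanSquareFamily

/-- For λ far out in the first quadrant, f_λ has an attracting fixed point α near
    λ + i attracting the orbits of both singular values 0 (critical point, with
    value λ) and λ + i. -/
theorem stmt_14 :
    ∃ T : ℝ, 0 < T ∧ ∀ l : ℂ, 1 ≤ l.re → 1 ≤ l.im → T < l.re * l.im →
      ∃ α ∈ Metric.closedBall (l + Complex.I) (1 / 2),
        l + Complex.tan (α ^ 2) = α ∧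
        ‖2 * α / (Complex.cos (α ^ 2)) ^ 2‖ < 1 ∧
        Tendsto (fun n : ℕ => (fun z : ℂ => l + Complex.tan (z ^ 2))^[n] 0)
          atTop (nhds α) ∧
        Tendsto (fun n : ℕ => (fun z : ℂ => l + Complex.tan (z ^ 2))^[n] (l + Complex.I))
          atTop (nhds α) := by
  refine ⟨40, by norm_num, fun l hre him hP ↦ ?_⟩
  obtain ⟨α, hαB, hfix, htendsto⟩ :=
    (lipschitzOnWith_add_tan_sq_closedBall hre him hP.le).exists_attracting_fixedPoint
      (by norm_num) (mapsTo_add_tan_sq_closedBall hre him) isClosed_closedBall.isComplete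
      (nonempty_closedBall.2 (by norm_num))
  refine ⟨α, hαB, hfix, (norm_two_mul_div_cos_sq_le hre him hP.le hαB).trans_lt (by norm_num),
    ?_, htendsto _ (mem_closedBall_self (by norm_num))⟩
  have hl : 1 ≤ (l ^ 2).im := by rw [pow_two, mul_im]; nlinarith
  refine (tendsto_add_atTop_iff_nat 2).1 ?_
  simpa only [iterate_add_apply, iterate_succ_apply, iterate_zero_apply, zero_pow two_ne_zero,
    tan_zero, add_zero] using htendsto _ (add_tan_sq_mem_closedBall hl)
end
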